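/- Assume the Setup (Section 7.2), let Q^x = xQx⁻¹, and suppose Z ⊆ α intersects both A and x • β. Then: (a) if g ∈ P ∩ Q^x then |A|*_{g•Z} = |x • β|*_{g•Z} = 1 and |α|*_{g•Z} = |x • B|*_{g•Z} = 0; (b) if g ∈ P ∖ Q^x then |A|*_{g•Z} = 1 and |x • B|*_{g•Z} = |α|*_{g•Z} = 0; (c) if g ∈ Q^x ∖ P then |A|*_{g•Z} = |x • B|*_{g•Z} = |α|*_{g•Z} = 0 and |x • β|*_{g•Z} = 1; (d) if g ∈ G ∖ (P ∪ Q^x) then |A|*_{g•Z} = |α|*_{g•Z} = 0 and |x • B|*_{g•Z} ≤ |x • β|*_{g•Z}. -/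

import Mathlib

/-!
Translation by `g ∈ P` fixes `α` and `A`, and translation by `g ∈ Q^x = Stab(x • β)` fixes `x • β`
and `x • B`; in these cases `g • Z` separates exactly what `Z` does, which is read off from
`Z ⊆ α`, `A ∩ x • β = ∅` and `x • B ∩ α = ∅`. Otherwise the edge property moves `g • Z` off `α`
(for `g ∉ P`), resp. moves `g • (Z ∩ x • β)` off `x • β` (for `g ∉ Q^x`).
-/

open Pointwise MulAction Set

open scoped Classical in
/-- `sep X Z` is the indicator `|X|*_Z`: it is `1` if `X` separates `Z`
(i.e. `Z` meets both `X` and its complement) and `0` otherwise. -/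
noncomputable def sep {E : Type*} (X Z : Set E) : ℕ :=
  if (Z ∩ X).Nonempty ∧ (Z ∩ Xᶜ).Nonempty then 1 else 0

section Separation

variable {E : Type*} {X Y Z : Set E}

lemma sep_eq_one (hX : (Z ∩ X).Nonempty) (hXc : (Z ∩ Xᶜ).Nonempty) : sep X Z = 1 := by
  simp [sep, hX, hXc]

lemma sep_le_one (X Z : Set E) : sep X Z ≤ 1 := by
  unfold sep; split <;> simp

lemma sep_eq_zero_of_subset (h : Z ⊆ X) : sep X Z = 0 := by
  have : Z ∩ Xᶜ = ∅ := by rw [← sdiff_eq]; exact sdiff_eq_empty.2 h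
  simp [sep, this]

lemma sep_eq_zero_of_disjoint (h : Disjoint Z X) : sep X Z = 0 := by
  simp [sep, h.inter_eq]

lemma sep_le_sep_of_subset (hXY : X ⊆ Y) (hZY : (Z \ Y).Nonempty) : sep X Z ≤ sep Y Z := by
  by_cases hX : (Z ∩ X).Nonempty
  · rw [sep_eq_one (hX.mono (inter_subset_inter_right Z hXY)) hZY]
    exact sep_le_one X Z
  · simp [sep, hX]

lemma sep_smul_smul {G : Type*} [Group G] [MulAction G E] (g : G) (X Z : Set E) :
    sep (g • X) (g • Z) = sep X Z := by
  simp only [sep]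
  rw [← smul_set_compl, ← smul_set_inter, ← smul_set_inter, smul_set_nonempty, smul_set_nonempty]

lemma sep_smul_of_mem_stabilizer {G : Type*} [Group G] [MulAction G E] {g : G}
    (hg : g ∈ stabilizer G X) (Z : Set E) : sep X (g • Z) = sep X Z := by
  have := sep_smul_smul g X Z
  rwa [mem_stabilizer_iff.mp hg] at this

end Separation

section Stabilizer

variable {G E : Type*} [Group G] [MulAction G E]

lemma coe_stabilizer_smul {Ω : Type*} [MulAction G Ω] (x : G) (a : Ω) :
    (stabilizer G (x • a) : Set G) = (fun q => x * q * x⁻¹) '' stabilizer G a := by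
  rw [stabilizer_smul_eq_stabilizer_map_conj, Subgroup.coe_map]
  rfl

lemma mem_stabilizer_sdiff {g : G} {X Y : Set E} (hX : g ∈ stabilizer G X)
    (hY : g ∈ stabilizer G Y) : g ∈ stabilizer G (X \ Y) := by
  rw [mem_stabilizer_iff] at hX hY ⊢
  rw [smul_set_sdiff, hX, hY]

lemma mem_stabilizer_biUnion_smul {P : Subgroup G} {h : G} (hh : h ∈ P) (S : Set E) :
    h ∈ stabilizer G (⋃ g ∈ P, g • S) := by
  rw [mem_stabilizer_iff, smul_set_iUnion₂]
  apply Subset.antisymm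
  · refine iUnion₂_subset fun g hg => ?_
    rw [smul_smul]
    exact subset_iUnion₂ (s := fun g (_ : g ∈ P) => g • S) (h * g) (mul_mem hh hg)
  · refine iUnion₂_subset fun g hg => ?_
    have : g • S = h • (h⁻¹ * g) • S := by rw [smul_smul, mul_inv_cancel_left]
    rw [this]
    exact subset_iUnion₂ (s := fun g (_ : g ∈ P) => h • g • S) (h⁻¹ * g)
      (mul_mem (inv_mem hh) hg)

lemma smul_set_subset_of_mem_stabilizer {g : G} {X Z : Set E} (hg : g ∈ stabilizer G X)
    (hZ : Z ⊆ X) : g • Z ⊆ X :=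
  (smul_set_mono hZ).trans_eq (mem_stabilizer_iff.mp hg)

lemma stabilizer_smul_mono {Ω : Type*} [MulAction G Ω] {a b : Ω}
    (h : stabilizer G a ≤ stabilizer G b) (x : G) : stabilizer G (x • a) ≤ stabilizer G (x • b) := by
  simpa only [stabilizer_smul_eq_stabilizer_map_conj] using Subgroup.map_mono h

lemma subset_biUnion_smul (P : Subgroup G) (S : Set E) : S ⊆ ⋃ g ∈ P, g • S := by
  simpa using subset_iUnion₂ (s := fun g (_ : g ∈ P) => g • S) 1 P.one_mem

end Stabilizer

def EdgeProperty (G : Type*) {E : Type*} [Group G] [MulAction G E] (α : Set E) : Prop :=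
  ∀ y : G, (α ∩ y • α).Nonempty → y • α = α

namespace EdgeProperty

variable {G E : Type*} [Group G] [MulAction G E] {α : Set E}

lemma disjoint_smul (h : EdgeProperty G α) {g : G} (hg : g ∉ stabilizer G α) :
    Disjoint α (g • α) := by
  rw [disjoint_iff_inter_eq_empty, ← not_nonempty_iff_eq_empty]
  exact fun hne => hg (h g hne)

lemma disjoint_smul_of_subset (h : EdgeProperty G α) {g : G} (hg : g ∉ stabilizer G α)
    {Z : Set E} (hZ : Z ⊆ α) : Disjoint (g • Z) α :=
  (h.disjoint_smul hg).symm.mono_left (smul_set_mono hZ)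

lemma smul (h : EdgeProperty G α) (x : G) : EdgeProperty G (x • α) := by
  intro y hy
  have hconj : (α ∩ (x⁻¹ * y * x) • α).Nonempty := by
    rw [← smul_set_nonempty (a := x⁻¹)] at hy
    simpa only [smul_set_inter, smul_smul, inv_mul_cancel, one_smul, mul_assoc] using hy
  rw [smul_smul, ← mul_inv_cancel_left x (y * x), ← smul_smul, ← mul_assoc, h _ hconj]

end EdgeProperty

section Setup

variable {G E : Type*} [Group G] [MulAction G E]

/-- `α ∖ P • (α ∩ T)`: the set `A` of Section 7.2 is `sdiffSaturation P α (x • β)` and `B` is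
`sdiffSaturation Q β (x⁻¹ • α)`. -/
def sdiffSaturation (P : Subgroup G) (α T : Set E) : Set E :=
  α \ ⋃ g ∈ P, g • (α ∩ T)

lemma sdiffSaturation_subset (P : Subgroup G) (α T : Set E) : sdiffSaturation P α T ⊆ α :=
  sdiff_subset

lemma disjoint_sdiffSaturation (P : Subgroup G) (α T : Set E) :
    Disjoint (sdiffSaturation P α T) T := by
  rw [Set.disjoint_left]
  rintro e ⟨he, hU⟩ hT
  exact hU (subset_biUnion_smul P _ ⟨he, hT⟩)

lemma stabilizer_le_stabilizer_sdiffSaturation (α T : Set E) :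
    stabilizer G α ≤ stabilizer G (sdiffSaturation (stabilizer G α) α T) := fun _ hg =>
  mem_stabilizer_sdiff hg (mem_stabilizer_biUnion_smul hg _)

variable {α β Z : Set E} {x g : G}

lemma sep_smul_of_mem_stabilizer_left (hZ : Z ⊆ α)
    (hZA : (Z ∩ sdiffSaturation (stabilizer G α) α (x • β)).Nonempty)
    (hZβ : (Z ∩ x • β).Nonempty) (hg : g ∈ stabilizer G α) :
    sep (sdiffSaturation (stabilizer G α) α (x • β)) (g • Z) = 1 ∧ sep α (g • Z) = 0 ∧
      sep (x • sdiffSaturation (stabilizer G β) β (x⁻¹ • α)) (g • Z) = 0 := by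
  have hgZ := smul_set_subset_of_mem_stabilizer hg hZ
  obtain ⟨z, hzZ, hzβ⟩ := hZβ
  refine ⟨?_, sep_eq_zero_of_subset hgZ, sep_eq_zero_of_disjoint ?_⟩
  · rw [sep_smul_of_mem_stabilizer (stabilizer_le_stabilizer_sdiffSaturation α _ hg)]
    exact sep_eq_one hZA ⟨z, hzZ, (disjoint_sdiffSaturation _ α _).notMem_of_mem_right hzβ⟩
  · exact (disjoint_smul_set_left.2 (disjoint_sdiffSaturation _ β _)).symm.mono_left hgZ

lemma sep_smul_of_notMem_stabilizer_left (hα : EdgeProperty G α) (hZ : Z ⊆ α)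
    (hg : g ∉ stabilizer G α) (P : Subgroup G) (T : Set E) :
    sep (sdiffSaturation P α T) (g • Z) = 0 ∧ sep α (g • Z) = 0 := by
  have hgZ := hα.disjoint_smul_of_subset hg hZ
  exact ⟨sep_eq_zero_of_disjoint (hgZ.mono_right (sdiffSaturation_subset _ α _)),
    sep_eq_zero_of_disjoint hgZ⟩

lemma sep_smul_of_mem_stabilizer_right (hZ : Z ⊆ α)
    (hZA : (Z ∩ sdiffSaturation (stabilizer G α) α (x • β)).Nonempty)
    (hZβ : (Z ∩ x • β).Nonempty) (hg : g ∈ stabilizer G (x • β)) :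
    sep (x • β) (g • Z) = 1 ∧
      sep (x • sdiffSaturation (stabilizer G β) β (x⁻¹ • α)) (g • Z) = 0 := by
  obtain ⟨z, hzZ, hzA⟩ := hZA
  have hgB := stabilizer_smul_mono (stabilizer_le_stabilizer_sdiffSaturation β (x⁻¹ • α)) x hg
  rw [sep_smul_of_mem_stabilizer hg, sep_smul_of_mem_stabilizer hgB]
  refine ⟨sep_eq_one hZβ ⟨z, hzZ, (disjoint_sdiffSaturation _ α _).notMem_of_mem_left hzA⟩,
    sep_eq_zero_of_disjoint ?_⟩
  exact (disjoint_smul_set_left.2 (disjoint_sdiffSaturation _ β _)).symm.mono_left hZ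

lemma sep_smul_le_of_notMem_stabilizer_right (hβ : EdgeProperty G β)
    (hZβ : (Z ∩ x • β).Nonempty) (hg : g ∉ stabilizer G (x • β)) (Q : Subgroup G) (T : Set E) :
    sep (x • sdiffSaturation Q β T) (g • Z) ≤ sep (x • β) (g • Z) := by
  obtain ⟨z, hzZ, hzβ⟩ := hZβ
  refine sep_le_sep_of_subset (smul_set_mono (sdiffSaturation_subset _ β _)) ⟨g • z, ?_, ?_⟩
  · exact smul_mem_smul_set hzZ
  · exact ((hβ.smul x).disjoint_smul hg).notMem_of_mem_right (smul_mem_smul_set hzβ)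

end Setup

/-- Lemma 7.8: Setup (Section 7.2), `Q^x = xQx⁻¹`, and `Z ⊆ α` meeting both
`A` and `x • β`.  Conclusions (a)–(d). -/
theorem stmt_9 {G E : Type*} [Group G] [MulAction G E]
    (α β : Set E)
    (hedgeα : ∀ y : G, (α ∩ y • α).Nonempty → y • α = α)
    (hedgeβ : ∀ y : G, (β ∩ y • β).Nonempty → y • β = β)
    (P Q : Subgroup G)
    (hP : P = MulAction.stabilizer G α)
    (hQ : Q = MulAction.stabilizer G β)
    (x : G)
    (γ γ' A B : Set E)
    (hγ : γ = ⋃ g ∈ P, g • (α ∩ x • β))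
    (hγ' : γ' = ⋃ g ∈ Q, g • (β ∩ x⁻¹ • α))
    (hA : A = α \ γ) (hB : B = β \ γ')
    (Qx : Set G) (hQx : Qx = (fun q => x * q * x⁻¹) '' (Q : Set G))
    (Z : Set E) (hZ : Z ⊆ α)
    (hZA : (Z ∩ A).Nonempty) (hZβ : (Z ∩ x • β).Nonempty) :
    (∀ g : G, g ∈ P → g ∈ Qx →
      sep A (g • Z) = 1 ∧ sep (x • β) (g • Z) = 1 ∧
      sep α (g • Z) = 0 ∧ sep (x • B) (g • Z) = 0) ∧
    (∀ g : G, g ∈ P → g ∉ Qx →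
      sep A (g • Z) = 1 ∧ sep (x • B) (g • Z) = 0 ∧ sep α (g • Z) = 0) ∧
    (∀ g : G, g ∈ Qx → g ∉ P →
      sep A (g • Z) = 0 ∧ sep (x • B) (g • Z) = 0 ∧
      sep α (g • Z) = 0 ∧ sep (x • β) (g • Z) = 1) ∧
    (∀ g : G, g ∉ P → g ∉ Qx →
      sep A (g • Z) = 0 ∧ sep α (g • Z) = 0 ∧
      sep (x • B) (g • Z) ≤ sep (x • β) (g • Z)) := by
  have hA_def : A = sdiffSaturation P α (x • β) := by rw [hA, hγ]; rfl
  have hB_def : B = sdiffSaturation Q β (x⁻¹ • α) := by rw [hB, hγ']; rfl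
  have hQx_iff (g : G) : g ∈ Qx ↔ g ∈ stabilizer G (x • β) := by
    rw [← SetLike.mem_coe, coe_stabilizer_smul, hQx, hQ]
  subst hA_def hB_def hP hQ
  simp only [hQx_iff]
  refine ⟨fun g hgP hgQ => ?_, fun g hgP _ => ?_, fun g hgQ hgP => ?_, fun g hgP hgQ => ?_⟩
  · obtain ⟨hA, hα, hB⟩ := sep_smul_of_mem_stabilizer_left hZ hZA hZβ hgP
    exact ⟨hA, (sep_smul_of_mem_stabilizer_right hZ hZA hZβ hgQ).1, hα, hB⟩
  · obtain ⟨hA, hα, hB⟩ := sep_smul_of_mem_stabilizer_left hZ hZA hZβ hgP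
    exact ⟨hA, hB, hα⟩
  · obtain ⟨hA, hα⟩ := sep_smul_of_notMem_stabilizer_left hedgeα hZ hgP _ (x • β)
    obtain ⟨hβ, hB⟩ := sep_smul_of_mem_stabilizer_right hZ hZA hZβ hgQ
    exact ⟨hA, hB, hα, hβ⟩
  · obtain ⟨hA, hα⟩ := sep_smul_of_notMem_stabilizer_left hedgeα hZ hgP _ (x • β)
    exact ⟨hA, hα, sep_smul_le_of_notMem_stabilizer_right hedgeβ hZβ hgQ _ _⟩
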